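/- arXiv:2512.17855 — 8 statements merged into one kernel-verified Lean document; each statement's English description precedes it below -/
import Mathlib

section
/- Let n ≥ 1, let x be a real polynomial of degree exactly n with leading coefficient b_n ≠ 0, let ΔQ > 0, let t_j ∈ ℝ and Δt ≥ 0. If there exists a real polynomial q of degree at most n − 1 such that |q(t) − x(t)| ≤ ΔQ for every t ∈ [t_j, t_j + Δt], then |b_n|·Δt^n ≤ 2^(2n−1)·ΔQ. -/
open Polynomial

lemma cheb_degree_le : ∀ n : ℕ, (Chebyshev.T ℝ n).degree ≤ n := by
  intro n
  induction n using Nat.strong_induction_on with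
  | _ n ih =>
    match n with
    | 0 => simp [Chebyshev.T_zero]
    | 1 => simpa [Chebyshev.T_one] using degree_X_le
    | (m + 2) =>
      have hT := Chebyshev.T_add_two ℝ (m : ℤ)
      rw [show ((m:ℤ) + 2) = ((m + 2 : ℕ) : ℤ) by push_cast; ring,
          show ((m:ℤ) + 1) = ((m + 1 : ℕ) : ℤ) by push_cast; ring] at hT
      rw [hT]
      have h2X : (2 * X : ℝ[X]).degree ≤ 1 := by
        calc ((2 : ℝ[X]) * X).degree ≤ (2:ℝ[X]).degree + X.degree := degree_mul_le _ _
          _ ≤ 0 + 1 := add_le_add (degree_C_le) degree_X_le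
          _ = 1 := by simp
      have ha : (2 * X * Chebyshev.T ℝ (m+1 : ℕ)).degree ≤ ((m + 2 : ℕ) : WithBot ℕ) := by
        calc (2 * X * Chebyshev.T ℝ (m+1 : ℕ)).degree
            ≤ (2 * X : ℝ[X]).degree + (Chebyshev.T ℝ (m+1 : ℕ)).degree := degree_mul_le _ _
          _ ≤ 1 + ((m + 1 : ℕ) : WithBot ℕ) := add_le_add h2X (ih (m+1) (by omega))
          _ = ((m + 2 : ℕ) : WithBot ℕ) := by
              push_cast
              rw [show ((m:WithBot ℕ) + 2) = 1 + (m + 1) by ring]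
      refine le_trans (degree_sub_le _ _) (max_le ha ?_)
      exact le_trans (ih m (by omega)) (by exact_mod_cast Nat.cast_le.mpr (by omega : m ≤ m + 2))

lemma cheb_coeff : ∀ n : ℕ, (Chebyshev.T ℝ (n+1 : ℕ)).coeff (n+1) = 2 ^ n := by
  intro n
  induction n with
  | zero => simp [Chebyshev.T_one]
  | succ m ih =>
    have hT := Chebyshev.T_add_two ℝ (m : ℤ)
    rw [show ((m:ℤ) + 2) = (((m + 1) + 1 : ℕ) : ℤ) by push_cast; ring,
        show ((m:ℤ) + 1) = ((m + 1 : ℕ) : ℤ) by push_cast; ring] at hT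
    rw [hT]
    have hc0 : (Chebyshev.T ℝ (m : ℕ)).coeff (m+2) = 0 := by
      apply coeff_eq_zero_of_degree_lt
      refine lt_of_le_of_lt (cheb_degree_le m) ?_
      exact_mod_cast Nat.cast_lt.mpr (show m < m+2 by omega)
    have hx : (2 * X * Chebyshev.T ℝ (m+1 : ℕ)).coeff (m+2)
        = 2 * (Chebyshev.T ℝ (m+1 : ℕ)).coeff (m+1) := by
      rw [mul_assoc, show ((2 : ℝ[X])) = C 2 from (map_ofNat C 2).symm, coeff_C_mul, coeff_X_mul]
    rw [coeff_sub, show (m+1)+1 = m+2 from rfl, hx, hc0, sub_zero, ih]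
    ring
open Polynomial Finset

lemma leadingCoeff_lagrange_basis {ι : Type*} [DecidableEq ι] {s : Finset ι} {v : ι → ℝ}
    (hvs : Set.InjOn v s) {i : ι} (hi : i ∈ s) :
    (Lagrange.basis s v i).leadingCoeff = Lagrange.nodalWeight s v i := by
  unfold Lagrange.basis Lagrange.nodalWeight
  rw [leadingCoeff_prod]
  refine Finset.prod_congr rfl fun j hj => ?_
  have hij : v i ≠ v j := by
    rcases Finset.mem_erase.mp hj with ⟨hne, hjs⟩
    exact fun hh => hne ((hvs.eq_iff hjs hi).mp hh.symm)
  unfold Lagrange.basisDivisor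
  rw [leadingCoeff_mul, leadingCoeff_C, (monic_X_sub_C (v j)).leadingCoeff, mul_one]

lemma divided_diff {ι : Type*} [DecidableEq ι] {s : Finset ι} {v : ι → ℝ}
    (hvs : Set.InjOn v s) (p : ℝ[X]) (hp : p.degree < s.card) :
    p.coeff (s.card - 1) = ∑ i ∈ s, p.eval (v i) * Lagrange.nodalWeight s v i := by
  conv_lhs => rw [Lagrange.eq_interpolate hvs hp]
  rw [Lagrange.interpolate_apply, finset_sum_coeff]
  refine Finset.sum_congr rfl fun i hi => ?_
  rw [coeff_C_mul]
  congr 1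
  rw [← Lagrange.natDegree_basis hvs hi, ← leadingCoeff]
  exact leadingCoeff_lagrange_basis hvs hi
open Polynomial Finset Real

noncomputable def chebNode (n k : ℕ) : ℝ := Real.cos (k * π / n)

lemma chebNode_anti {n : ℕ} (hn : 1 ≤ n) {j k : ℕ} (hjk : j < k) (hk : k ≤ n) :
    chebNode n k < chebNode n j := by
  have hnpos : (0:ℝ) < n := by exact_mod_cast hn
  apply Real.cos_lt_cos_of_nonneg_of_le_pi
  · positivity
  · rw [div_le_iff₀ hnpos]
    have : (k:ℝ) ≤ n := by exact_mod_cast hk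
    nlinarith [Real.pi_pos]
  · have hj : (j:ℝ) < k := by exact_mod_cast hjk
    have := Real.pi_pos
    apply div_lt_div_of_pos_right ?_ hnpos
    nlinarith

lemma chebNode_injOn {n : ℕ} (hn : 1 ≤ n) :
    Set.InjOn (chebNode n) (Finset.range (n+1)) := by
  intro a ha b hb hab
  simp only [Finset.coe_range, Set.mem_Iio] at ha hb
  by_contra hne
  rcases Nat.lt_or_ge a b with h | h
  · exact absurd hab (ne_of_gt (chebNode_anti hn h (by omega)))
  · have : b < a := by omega
    exact absurd hab.symm (ne_of_gt (chebNode_anti hn this (by omega)))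

lemma chebWeight_sign {n : ℕ} (hn : 1 ≤ n) {k : ℕ} (hk : k ∈ Finset.range (n+1)) :
    (-1:ℝ)^k * Lagrange.nodalWeight (Finset.range (n+1)) (chebNode n) k
      = |Lagrange.nodalWeight (Finset.range (n+1)) (chebNode n) k| := by
  have hkn : k ≤ n := by simpa using Nat.lt_succ_iff.mp (Finset.mem_range.mp hk)
  unfold Lagrange.nodalWeight
  have key : ∀ j ∈ (Finset.range (n+1)).erase k,
      (chebNode n k - chebNode n j)⁻¹
        = (if j < k then (-1:ℝ) else 1) * |chebNode n k - chebNode n j|⁻¹ := by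
    intro j hj
    rcases Finset.mem_erase.mp hj with ⟨hne, hjr⟩
    have hjn : j ≤ n := Nat.lt_succ_iff.mp (Finset.mem_range.mp hjr)
    rcases lt_or_gt_of_ne hne with hlt | hgt
    · have : chebNode n k - chebNode n j < 0 :=
        sub_neg.mpr (chebNode_anti hn hlt hkn)
      rw [if_pos hlt, abs_of_neg this]
      rw [inv_neg]
      ring
    · have : 0 < chebNode n k - chebNode n j :=
        sub_pos.mpr (chebNode_anti hn hgt hjn)
      rw [if_neg (by omega), abs_of_pos this, one_mul]
  rw [Finset.prod_congr rfl key, Finset.prod_mul_distrib]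
  have hfil : ((Finset.range (n+1)).erase k).filter (· < k) = Finset.range k := by
    ext j
    simp only [Finset.mem_filter, Finset.mem_erase, Finset.mem_range]
    constructor
    · rintro ⟨⟨_, _⟩, h⟩; exact h
    · intro h; exact ⟨⟨by omega, by omega⟩, h⟩
  have hprodif : ∏ j ∈ (Finset.range (n+1)).erase k, (if j < k then (-1:ℝ) else 1)
      = (-1:ℝ)^k := by
    rw [Finset.prod_ite, Finset.prod_const, Finset.prod_const, one_pow, mul_one, hfil,
      Finset.card_range]
  rw [hprodif, ← mul_assoc, ← mul_pow]
  have hnn : (0:ℝ) ≤ ∏ j ∈ (Finset.range (n+1)).erase k, |chebNode n k - chebNode n j|⁻¹ :=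
    Finset.prod_nonneg fun j _ => by positivity
  rw [neg_one_mul, neg_neg, one_pow, one_mul, abs_mul, abs_pow, abs_neg, abs_one, one_pow,
    one_mul, abs_of_nonneg hnn]

lemma chebWeight_sum {n : ℕ} (hn : 1 ≤ n) :
    ∑ k ∈ Finset.range (n+1), |Lagrange.nodalWeight (Finset.range (n+1)) (chebNode n) k|
      = 2 ^ (n - 1) := by
  have hinj := chebNode_injOn hn
  have hdeg : (Chebyshev.T ℝ (n:ℕ)).degree < (Finset.range (n+1)).card := by
    rw [Finset.card_range]
    refine lt_of_le_of_lt (cheb_degree_le n) ?_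
    exact_mod_cast Nat.cast_lt.mpr (show n < n+1 by omega)
  have hdd := divided_diff hinj (Chebyshev.T ℝ (n:ℕ)) hdeg
  rw [Finset.card_range] at hdd
  have heval : ∀ k ∈ Finset.range (n+1),
      (Chebyshev.T ℝ (n:ℕ)).eval (chebNode n k) = (-1:ℝ)^k := by
    intro k hk
    unfold chebNode
    rw [Polynomial.Chebyshev.T_real_cos]
    have hn0 : (n:ℝ) ≠ 0 := by positivity
    rw [show ((n:ℤ):ℝ) * ((k:ℝ) * π / n) = (k:ℝ) * π by push_cast; field_simp]
    simpa using Real.cos_nat_mul_pi_sub 0 k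
  have hcoef : (Chebyshev.T ℝ (n:ℕ)).coeff n = 2 ^ (n - 1) := by
    obtain ⟨m, rfl⟩ : ∃ m, n = m + 1 := ⟨n - 1, by omega⟩
    simpa using cheb_coeff m
  calc ∑ k ∈ Finset.range (n+1), |Lagrange.nodalWeight (Finset.range (n+1)) (chebNode n) k|
      = ∑ k ∈ Finset.range (n+1),
          (Chebyshev.T ℝ (n:ℕ)).eval (chebNode n k)
            * Lagrange.nodalWeight (Finset.range (n+1)) (chebNode n) k := by
        refine Finset.sum_congr rfl fun k hk => ?_
        rw [heval k hk, chebWeight_sign hn hk]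
    _ = (Chebyshev.T ℝ (n:ℕ)).coeff ((n+1) - 1) := hdd.symm
    _ = 2 ^ (n - 1) := by simpa using hcoef

/-- Necessity direction of the step-size bound: if a polynomial `q` of degree at most `n − 1`
stays within `ΔQ` of a degree-`n` polynomial `x` (leading coefficient `b_n ≠ 0`) on
`[t_j, t_j + Δt]`, then `|b_n|·Δt^n ≤ 2^(2n−1)·ΔQ`. -/
theorem step_size_bound_necessity (n : ℕ) (hn : 1 ≤ n) (x : Polynomial ℝ) (bn : ℝ)
    (hx : x.degree = n) (hbn : x.leadingCoeff = bn) (hbn0 : bn ≠ 0)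
    (ΔQ : ℝ) (hΔQ : 0 < ΔQ) (tj Δt : ℝ) (hΔt : 0 ≤ Δt)
    (h : ∃ q : Polynomial ℝ, q.degree ≤ (n - 1 : ℕ) ∧
        ∀ t ∈ Set.Icc tj (tj + Δt), |q.eval t - x.eval t| ≤ ΔQ) :
    |bn| * Δt ^ n ≤ 2 ^ (2 * n - 1) * ΔQ := by
  obtain ⟨q, hqdeg, hqb⟩ := h
  rcases eq_or_lt_of_le hΔt with rfl | hΔt0
  · rw [zero_pow (by omega : n ≠ 0), mul_zero]
    positivity
  set s := Finset.range (n+1) with hs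
  set c := Δt / 2 with hc
  have hcpos : 0 < c := by positivity
  -- the shifted nodes
  set w : ℕ → ℝ := fun k => tj + c + c * chebNode n k with hw
  have hwinj : Set.InjOn w s := by
    intro a ha b hb hab
    apply chebNode_injOn hn ha hb
    have : c * chebNode n a = c * chebNode n b := by
      have := hab; simp only [hw] at this; linarith
    exact mul_left_cancel₀ (ne_of_gt hcpos) this
  -- p = x - q
  set p : Polynomial ℝ := x - q with hp
  have hqlt : q.degree < x.degree := by
    rw [hx]
    refine lt_of_le_of_lt hqdeg ?_
    exact_mod_cast Nat.cast_lt.mpr (show n - 1 < n by omega)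
  have hpdeg : p.degree = n := by
    rw [hp, degree_sub_eq_left_of_degree_lt hqlt, hx]
  have hpc : p.coeff n = bn := by
    have hqn : q.coeff n = 0 :=
      coeff_eq_zero_of_degree_lt (lt_of_lt_of_le hqlt (le_of_eq hx))
    have hxn : x.coeff n = bn := by
      rw [← hbn, leadingCoeff, natDegree_eq_of_degree_eq_some hx]
    rw [hp, coeff_sub, hqn, hxn, sub_zero]
  -- divided differences with shifted nodes
  have hcards : s.card = n + 1 := by rw [hs, Finset.card_range]
  have hpdeg' : p.degree < s.card := by
    rw [hpdeg, hcards]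
    exact_mod_cast Nat.cast_lt.mpr (show n < n + 1 by omega)
  have hdd := divided_diff hwinj p hpdeg'
  rw [hcards, Nat.add_sub_cancel] at hdd
  -- scaling of weights
  have hscale : ∀ k ∈ s, Lagrange.nodalWeight s w k
      = c⁻¹ ^ n * Lagrange.nodalWeight s (chebNode n) k := by
    intro k hk
    unfold Lagrange.nodalWeight
    have hcard : (s.erase k).card = n := by
      rw [Finset.card_erase_of_mem hk, hcards]
      omega
    rw [Finset.prod_congr rfl (fun j hj => by
        rw [show w k - w j = c * (chebNode n k - chebNode n j) by simp only [hw]; ring, mul_inv]),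
      Finset.prod_mul_distrib, Finset.prod_const, hcard]
  -- nodes are in the interval
  have hmem : ∀ k ∈ s, w k ∈ Set.Icc tj (tj + Δt) := by
    intro k _
    have h1 : chebNode n k ≤ 1 := Real.cos_le_one _
    have h2 : -1 ≤ chebNode n k := Real.neg_one_le_cos _
    constructor
    · simp only [hw, hc]; nlinarith
    · simp only [hw, hc]; nlinarith
  have hbound : ∀ k ∈ s, |p.eval (w k)| ≤ ΔQ := by
    intro k hk
    have := hqb (w k) (hmem k hk)
    rw [hp]
    simpa [eval_sub, abs_sub_comm] using this
  -- the estimate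
  have hsum : |bn| ≤ ΔQ * (c⁻¹ ^ n * 2 ^ (n-1)) := by
    rw [← hpc, hdd]
    calc |∑ k ∈ s, p.eval (w k) * Lagrange.nodalWeight s w k|
        ≤ ∑ k ∈ s, |p.eval (w k) * Lagrange.nodalWeight s w k| := Finset.abs_sum_le_sum_abs _ _
      _ ≤ ∑ k ∈ s, ΔQ * |Lagrange.nodalWeight s w k| := by
          refine Finset.sum_le_sum fun k hk => ?_
          rw [abs_mul]
          exact mul_le_mul_of_nonneg_right (hbound k hk) (abs_nonneg _)
      _ = ΔQ * (c⁻¹ ^ n * 2 ^ (n-1)) := by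
          rw [← Finset.mul_sum]
          congr 1
          calc ∑ k ∈ s, |Lagrange.nodalWeight s w k|
              = ∑ k ∈ s, c⁻¹ ^ n * |Lagrange.nodalWeight s (chebNode n) k| := by
                refine Finset.sum_congr rfl fun k hk => ?_
                rw [hscale k hk, abs_mul, abs_pow, abs_inv, abs_of_pos hcpos]
            _ = c⁻¹ ^ n * 2 ^ (n-1) := by
                rw [← Finset.mul_sum, chebWeight_sum hn]
  -- conclude
  have hcn : c⁻¹ ^ n * Δt ^ n = 2 ^ n := by
    rw [← mul_pow, hc]
    rw [show (Δt / 2)⁻¹ * Δt = 2 by field_simp]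
  have h2n : (2:ℝ) ^ n * 2 ^ (n-1) = 2 ^ (2*n - 1) := by
    rw [← pow_add]
    congr 1
    omega
  calc |bn| * Δt ^ n ≤ (ΔQ * (c⁻¹ ^ n * 2 ^ (n-1))) * Δt ^ n := by
        exact mul_le_mul_of_nonneg_right hsum (by positivity)
    _ = ΔQ * ((c⁻¹ ^ n * Δt ^ n) * 2 ^ (n-1)) := by ring
    _ = 2 ^ (2*n - 1) * ΔQ := by rw [hcn, h2n]; ring
end

section
/- Let n ≥ 1, let x be a real polynomial of degree exactly n with leading coefficient b_n ≠ 0, let ΔQ > 0, let t_j ∈ ℝ and Δt ≥ 0. Then there exists a real polynomial q of degree at most n − 1 such that |q(t) − x(t)| ≤ ΔQ for every t ∈ [t_j, t_j + Δt] if and only if |b_n|·Δt^n ≤ 2^(2n−1)·ΔQ. -/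
open Polynomial Polynomial.Chebyshev Set

/-!
Write `e = x - q`, a polynomial of degree `n` with leading coefficient `b_n`. If `|e| ≤ ΔQ` on
`[t_j, t_j + Δt]`, the affine substitution onto `[-1, 1]` turns `e / ΔQ` into a polynomial
bounded by `1` there with leading coefficient `b_n (Δt / 2)^n / ΔQ`, which Chebyshev's extremal
property caps at `2^(n-1)`. Conversely, `e = b_n 2^(1-2n) Δt^n T_n((2t - 2t_j - Δt) / Δt)`
attains the bound, since `|T_n| ≤ 1` on `[-1, 1]`.
-/

theorem pow_sub_one_mul_pow {M : Type*} [Monoid M] (a : M) (n : ℕ) :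
    a ^ (n - 1) * a ^ n = a ^ (2 * n - 1) := by
  rw [← pow_add]
  congr 1
  omega

namespace Polynomial

theorem degree_le_natCast_sub_one_iff {R : Type*} [Semiring R] {p : R[X]} {n : ℕ} (hn : n ≠ 0) :
    p.degree ≤ ↑(n - 1) ↔ p.degree < n := by
  induction p.degree with
  | bot => simp
  | coe d => rw [Nat.cast_withBot, Nat.cast_withBot, WithBot.coe_le_coe, WithBot.coe_lt_coe]; omega

theorem Chebyshev.abs_leadingCoeff_le_of_forall_abs_le_one {n : ℕ} {P : ℝ[X]}
    (hPdeg : P.degree ≤ n) (hPbnd : ∀ s ∈ Icc (-1) 1, |P.eval s| ≤ 1) :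
    |P.leadingCoeff| ≤ 2 ^ (n - 1) := by
  refine abs_le'.mpr ⟨leadingCoeff_le_of_forall_abs_le_one hPdeg hPbnd, ?_⟩
  rw [← leadingCoeff_neg]
  exact leadingCoeff_le_of_forall_abs_le_one (by rwa [degree_neg])
    fun s hs => by rw [eval_neg, abs_neg]; exact hPbnd s hs

theorem abs_leadingCoeff_mul_pow_natDegree_le_of_forall_abs_eval_le {p : ℝ[X]} {a b M : ℝ}
    (hab : a < b) (hM : 0 < M) (hp : ∀ t ∈ Icc a b, |p.eval t| ≤ M) :
    |p.leadingCoeff| * (b - a) ^ p.natDegree ≤ 2 ^ (2 * p.natDegree - 1) * M := by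
  set N := p.natDegree
  have hr : 0 < (b - a) / 2 := by linarith
  set φ : ℝ[X] := C ((b - a) / 2) * X + C ((a + b) / 2)
  have hφ : ∀ s ∈ Icc (-1) 1, φ.eval s ∈ Icc a b := fun s hs => by
    simp only [φ, eval_add, eval_mul, eval_C, eval_X]
    constructor <;> nlinarith [hs.1, hs.2]
  set P : ℝ[X] := C M⁻¹ * p.comp φ
  have hPdeg : P.degree ≤ N := by
    refine degree_le_of_natDegree_le ((natDegree_C_mul_le _ _).trans ?_)
    rw [natDegree_comp, natDegree_linear hr.ne', mul_one]
  have hPbnd : ∀ s ∈ Icc (-1) 1, |P.eval s| ≤ 1 := fun s hs => by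
    rw [eval_mul, eval_C, eval_comp, abs_mul, abs_inv, abs_of_pos hM, inv_mul_le_one₀ hM]
    exact hp _ (hφ s hs)
  have hPlead : P.leadingCoeff = M⁻¹ * (p.leadingCoeff * ((b - a) / 2) ^ N) := by
    rw [leadingCoeff_mul, leadingCoeff_C, leadingCoeff_comp (by simp [φ, natDegree_linear hr.ne']),
      leadingCoeff_linear hr.ne']
  calc |p.leadingCoeff| * (b - a) ^ N = 2 ^ N * M * |P.leadingCoeff| := by
        rw [hPlead, abs_mul, abs_mul, abs_inv, abs_of_pos hM, abs_pow, abs_of_pos hr, div_pow]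
        field_simp
    _ ≤ 2 ^ N * M * 2 ^ (N - 1) := by
        gcongr
        exact Chebyshev.abs_leadingCoeff_le_of_forall_abs_le_one hPdeg hPbnd
    _ = 2 ^ (2 * N - 1) * M := by rw [← pow_sub_one_mul_pow]; ring

theorem exists_monic_natDegree_eq_forall_abs_eval_le (n : ℕ) {a b : ℝ} (hab : a < b) :
    ∃ P : ℝ[X], P.Monic ∧ P.natDegree = n ∧
      ∀ t ∈ Icc a b, |P.eval t| ≤ (b - a) ^ n / 2 ^ (2 * n - 1) := by
  have hba : 0 < b - a := by linarith
  have hslope : 2 / (b - a) ≠ 0 := by positivity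
  set ψ : ℝ[X] := C (2 / (b - a)) * X + C (-(a + b) / (b - a))
  have hψ : ∀ t ∈ Icc a b, |ψ.eval t| ≤ 1 := fun t ht => by
    have : ψ.eval t = (2 * t - (a + b)) / (b - a) := by
      simp only [ψ, eval_add, eval_mul, eval_C, eval_X]; ring
    rw [this, abs_div, abs_of_pos hba, div_le_one hba, abs_le]
    constructor <;> linarith [ht.1, ht.2]
  set c : ℝ := (b - a) ^ n / 2 ^ (2 * n - 1)
  have hc : 0 < c := by positivity
  refine ⟨C c * (T ℝ n).comp ψ, ?_, ?_, fun t ht => ?_⟩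
  · rw [Monic, leadingCoeff_mul, leadingCoeff_C,
      leadingCoeff_comp (by simp [ψ, natDegree_linear hslope]), leadingCoeff_T,
      leadingCoeff_linear hslope, natDegree_T, Int.natAbs_natCast, div_pow, mul_div_assoc',
      pow_sub_one_mul_pow]
    field_simp
    exact div_mul_cancel₀ _ (by positivity)
  · rw [natDegree_C_mul hc.ne', natDegree_comp, natDegree_T, natDegree_linear hslope,
      Int.natAbs_natCast, mul_one]
  · rw [eval_mul, eval_C, eval_comp, abs_mul, abs_of_pos hc]
    exact mul_le_of_le_one_right hc.le (abs_eval_T_real_le_one n (hψ t ht))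

theorem exists_degree_lt_forall_abs_eval_sub_le {p : ℝ[X]} (hp : p ≠ 0) {a b : ℝ}
    (hab : a < b) :
    ∃ q : ℝ[X], q.degree < p.degree ∧ ∀ t ∈ Icc a b, |q.eval t - p.eval t| ≤
      |p.leadingCoeff| * (b - a) ^ p.natDegree / 2 ^ (2 * p.natDegree - 1) := by
  obtain ⟨P, hPmonic, hPdeg, hPbnd⟩ :=
    exists_monic_natDegree_eq_forall_abs_eval_le p.natDegree hab
  refine ⟨p - C p.leadingCoeff * P, degree_sub_lt_left ?_ hp ?_, fun t ht => ?_⟩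
  · rw [degree_C_mul (leadingCoeff_ne_zero.mpr hp), degree_eq_natDegree hPmonic.ne_zero, hPdeg,
      degree_eq_natDegree hp]
  · rw [leadingCoeff_mul, leadingCoeff_C, hPmonic.leadingCoeff, mul_one]
  · rw [eval_sub, eval_mul, eval_C, sub_sub_cancel_left, abs_neg, abs_mul, mul_div_assoc]
    exact mul_le_mul_of_nonneg_left (hPbnd t ht) (abs_nonneg _)

end Polynomial

theorem step_size_bound_iff_general (n : ℕ) (hn : 1 ≤ n) (x : Polynomial ℝ) (bn : ℝ)
    (hx : x.degree = n) (hbn : x.leadingCoeff = bn)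
    (ΔQ : ℝ) (hΔQ : 0 < ΔQ) (tj Δt : ℝ) (hΔt : 0 ≤ Δt) :
    (∃ q : Polynomial ℝ, q.degree ≤ (n - 1 : ℕ) ∧
        ∀ t ∈ Set.Icc tj (tj + Δt), |q.eval t - x.eval t| ≤ ΔQ) ↔
      |bn| * Δt ^ n ≤ 2 ^ (2 * n - 1) * ΔQ := by
  have hn0 : n ≠ 0 := by omega
  simp_rw [degree_le_natCast_sub_one_iff hn0]
  obtain rfl | hΔt := hΔt.eq_or_lt
  · refine iff_of_true ⟨C (x.eval tj), degree_C_le.trans_lt (mod_cast hn), fun t ht => ?_⟩ ?_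
    · rw [add_zero, Icc_self, mem_singleton_iff] at ht
      simp [ht, hΔQ.le]
    · rw [zero_pow hn0, mul_zero]
      positivity
  have hI : tj < tj + Δt := by linarith
  have hxn : x.natDegree = n := natDegree_eq_of_degree_eq_some hx
  rw [← hx]
  constructor
  · rintro ⟨q, hq, hqx⟩
    have h := abs_leadingCoeff_mul_pow_natDegree_le_of_forall_abs_eval_le (p := x - q) hI hΔQ
      fun t ht => by rw [eval_sub, abs_sub_comm]; exact hqx t ht
    rwa [natDegree_eq_of_degree_eq (degree_sub_eq_left_of_degree_lt hq),
      leadingCoeff_sub_of_degree_lt hq, hbn, hxn, add_sub_cancel_left] at h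
  · intro h
    have hx0 : x ≠ 0 := by rintro rfl; simp at hx
    obtain ⟨q, hq, hqx⟩ := exists_degree_lt_forall_abs_eval_sub_le hx0 hI
    refine ⟨q, hq, fun t ht => (hqx t ht).trans ?_⟩
    rwa [hbn, hxn, add_sub_cancel_left, div_le_iff₀ (by positivity), mul_comm ΔQ]

/-- Sharp step-size characterization: a polynomial `q` of degree at most `n − 1` staying within
`ΔQ` of a degree-`n` polynomial `x` (leading coefficient `b_n ≠ 0`) on `[t_j, t_j + Δt]` exists
if and only if `|b_n|·Δt^n ≤ 2^(2n−1)·ΔQ`. -/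
theorem step_size_bound_iff (n : ℕ) (hn : 1 ≤ n) (x : Polynomial ℝ) (bn : ℝ)
    (hx : x.degree = n) (hbn : x.leadingCoeff = bn) (hbn0 : bn ≠ 0)
    (ΔQ : ℝ) (hΔQ : 0 < ΔQ) (tj Δt : ℝ) (hΔt : 0 ≤ Δt) :
    (∃ q : Polynomial ℝ, q.degree ≤ (n - 1 : ℕ) ∧
        ∀ t ∈ Set.Icc tj (tj + Δt), |q.eval t - x.eval t| ≤ ΔQ) ↔
      |bn| * Δt ^ n ≤ 2 ^ (2 * n - 1) * ΔQ :=
  step_size_bound_iff_general n hn x bn hx hbn ΔQ hΔQ tj Δt hΔt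
end

section
/- Let n ≥ 1, let a ∈ ℝ, let u, p : ℝ → ℝ with u (n−1)-times differentiable and p n-times differentiable, and let x : ℝ → ℝ be differentiable with x'(t) = a·(x(t) − p(t)) + u(t) for all t ∈ ℝ. Then q := x − p is n-times differentiable at 0 and q^(n)(0) = r_n − s_n, where r_n := a^n·x(0) + Σ_{k=0}^{n−1} a^(n−1−k)·u^(k)(0) and s_n := Σ_{k=0}^{n} a^(n−k)·p^(k)(0). -/
/-!
Written as `x' = a x + g` with `g = u - a p`, the equation is linear in `x` with an
`(n-1)`-times differentiable forcing term. Differentiating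
`x^(m) = a^m x + Σ_{k<m} a^(m-1-k) g^(k)` once more gives the same identity for `m + 1`, so `x`
is `n`-times differentiable; subtracting `p^(n)` and expanding `g^(k) = u^(k) - a p^(k)` gathers
the `p`-terms into `s_n`.
-/

open Finset

lemma pow_sub_one_sub_mul_self {M : Type*} [Monoid M] (a : M) {k n : ℕ} (hk : k < n) :
    a ^ (n - 1 - k) * a = a ^ (n - k) := by
  rw [← pow_succ]
  congr 1
  omega

section LinearODE

variable {𝕜 F : Type*} [NontriviallyNormedField 𝕜] [NormedAddCommGroup F] [NormedSpace 𝕜 F]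
  {a : 𝕜} {x g : 𝕜 → F}

theorem contDiff_succ_of_hasDerivAt_smul_add {N : ℕ} (hg : ContDiff 𝕜 N g)
    (hx : ∀ t, HasDerivAt x (a • x t + g t) t) : ContDiff 𝕜 (N + 1 : ℕ) x := by
  have hdiff : Differentiable 𝕜 x := fun t => (hx t).differentiableAt
  have hderiv : deriv x = fun t => a • x t + g t := funext fun t => (hx t).deriv
  induction N with
  | zero =>
    rw [Nat.cast_succ, contDiff_succ_iff_deriv, hderiv, Nat.cast_zero, contDiff_zero]
    exact ⟨hdiff, by simp, (hdiff.continuous.const_smul a).add (contDiff_zero.mp hg)⟩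
  | succ N ih =>
    have hxN : ContDiff 𝕜 (N + 1 : ℕ) x := ih (hg.of_le (by norm_cast; omega))
    rw [Nat.cast_succ, contDiff_succ_iff_deriv, hderiv]
    exact ⟨hdiff, by simp, (hxN.const_smul a).add hg⟩

theorem iteratedDeriv_eq_of_hasDerivAt_smul_add {N m : ℕ} (hm : m ≤ N + 1)
    (hg : ContDiff 𝕜 N g) (hx : ∀ t, HasDerivAt x (a • x t + g t) t) (t : 𝕜) :
    iteratedDeriv m x t = a ^ m • x t + ∑ k ∈ range m, a ^ (m - 1 - k) • iteratedDeriv k g t := by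
  induction m with
  | zero => simp
  | succ m ih =>
    have hxm : ContDiffAt 𝕜 m x t :=
      ((contDiff_succ_of_hasDerivAt_smul_add hg hx).of_le (by norm_cast; omega)).contDiffAt
    have hgm : ContDiffAt 𝕜 m g t := (hg.of_le (by norm_cast; omega)).contDiffAt
    have hderiv : deriv x = fun t => a • x t + g t := funext fun t => (hx t).deriv
    rw [iteratedDeriv_succ', hderiv, iteratedDeriv_fun_add (hxm.const_smul a) hgm,
      iteratedDeriv_fun_const_smul_field, ih (by omega), smul_add, smul_smul, ← pow_succ',
      smul_sum, sum_range_succ, Nat.add_sub_cancel, Nat.sub_self, pow_zero, one_smul, add_assoc]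
    congr 2
    refine sum_congr rfl fun k hk => ?_
    rw [smul_smul, mul_comm, pow_sub_one_sub_mul_self a (mem_range.mp hk)]

end LinearODE

theorem iteratedDeriv_quantized_state_general (n : ℕ) (a : ℝ) (u p x : ℝ → ℝ)
    (hu : ContDiff ℝ (n - 1 : ℕ) u) (hp : ContDiff ℝ (n : ℕ) p)
    (hx : ∀ t : ℝ, HasDerivAt x (a * (x t - p t) + u t) t) :
    ContDiffAt ℝ (n : ℕ) (fun t => x t - p t) 0 ∧
      iteratedDeriv n (fun t => x t - p t) 0 =
        (a ^ n * x 0 + ∑ k ∈ Finset.range n, a ^ (n - 1 - k) * iteratedDeriv k u 0)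
          - ∑ k ∈ Finset.range (n + 1), a ^ (n - k) * iteratedDeriv k p 0 := by
  have hp' : ContDiff ℝ (n - 1 : ℕ) p := hp.of_le (by norm_cast; omega)
  have hg : ContDiff ℝ (n - 1 : ℕ) fun t => u t - a * p t := hu.sub (contDiff_const.mul hp')
  have hx' : ∀ t, HasDerivAt x (a • x t + (u t - a * p t)) t := fun t => by
    convert hx t using 1
    rw [smul_eq_mul]
    ring
  have hxn : ContDiff ℝ n x :=
    (contDiff_succ_of_hasDerivAt_smul_add hg hx').of_le (by norm_cast; omega)
  have hg_deriv : ∀ k ∈ range n, iteratedDeriv k (fun t => u t - a * p t) 0 =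
      iteratedDeriv k u 0 - a * iteratedDeriv k p 0 := fun k hk => by
    have hkn : (k : WithTop ℕ∞) ≤ (n - 1 : ℕ) := by norm_cast; have := mem_range.mp hk; omega
    rw [iteratedDeriv_fun_sub (hu.of_le hkn).contDiffAt
      (contDiff_const.mul (hp'.of_le hkn)).contDiffAt, iteratedDeriv_const_mul_field]
  refine ⟨(hxn.sub hp).contDiffAt, ?_⟩
  rw [iteratedDeriv_fun_sub hxn.contDiffAt hp.contDiffAt,
    iteratedDeriv_eq_of_hasDerivAt_smul_add (by omega) hg hx' 0,
    sum_congr rfl fun k hk => by rw [hg_deriv k hk], sum_range_succ _ n, Nat.sub_self, pow_zero,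
    one_mul]
  have hp_terms : ∑ k ∈ range n, a ^ (n - 1 - k) * (a * iteratedDeriv k p 0) =
      ∑ k ∈ range n, a ^ (n - k) * iteratedDeriv k p 0 := sum_congr rfl fun k hk => by
    rw [← mul_assoc, pow_sub_one_sub_mul_self a (mem_range.mp hk)]
  simp only [smul_eq_mul, mul_sub, sum_sub_distrib, hp_terms]
  ring

/-- If `u` is `(n−1)`-times differentiable, `p` is `n`-times differentiable, and
`x' = a·(x − p) + u`, then `q := x − p` is `n`-times differentiable at `0` and
`q^(n)(0) = r_n − s_n` with `r_n = a^n·x(0) + Σ_{k<n} a^(n−1−k)·u^(k)(0)` and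
`s_n = Σ_{k≤n} a^(n−k)·p^(k)(0)`. -/
theorem iteratedDeriv_quantized_state (n : ℕ) (hn : 1 ≤ n) (a : ℝ) (u p x : ℝ → ℝ)
    (hu : ContDiff ℝ (n - 1 : ℕ) u) (hp : ContDiff ℝ (n : ℕ) p)
    (hx : ∀ t : ℝ, HasDerivAt x (a * (x t - p t) + u t) t) :
    ContDiffAt ℝ (n : ℕ) (fun t => x t - p t) 0 ∧
      iteratedDeriv n (fun t => x t - p t) 0 =
        (a ^ n * x 0 + ∑ k ∈ Finset.range n, a ^ (n - 1 - k) * iteratedDeriv k u 0)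
          - ∑ k ∈ Finset.range (n + 1), a ^ (n - k) * iteratedDeriv k p 0 :=
  iteratedDeriv_quantized_state_general n a u p x hu hp hx
end

section
/- Let n ≥ 1, let a ∈ ℝ with a ≠ 0, let u : ℝ → ℝ be (n−1)-times differentiable, let x : ℝ → ℝ be differentiable, and let c := r_n/a^n where r_n := a^n·x(0) + Σ_{k=0}^{n−1} a^(n−1−k)·u^(k)(0). If x'(t) = a·(x(t) − c) + u(t) for all t ∈ ℝ, then x is n-times differentiable at 0 and x^(n)(0) = 0. -/
/-!
Put `y := x - c`, so that `y' = a y + u`. Differentiating this equation `n - 1` times gives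
`y⁽ⁿ⁾ = aⁿ y + ∑_{k<n} a^(n-1-k) u⁽ᵏ⁾`, and at `t = 0` the right-hand side is
`aⁿ x(0) - r_n + ∑_{k<n} a^(n-1-k) u⁽ᵏ⁾(0) = 0` by the choice of `c`. Since `x` and `y` differ
by a constant, `x⁽ⁿ⁾(0) = y⁽ⁿ⁾(0) = 0`.
-/

open Finset

section LinearODE

variable {𝕜 E : Type*} [NontriviallyNormedField 𝕜] [NormedAddCommGroup E] [NormedSpace 𝕜 E]
  {a : 𝕜} {f y : 𝕜 → E}

theorem deriv_eq_of_hasDerivAt_linear (hy : ∀ t, HasDerivAt y (a • y t + f t) t) :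
    deriv y = fun t => a • y t + f t :=
  funext fun t => (hy t).deriv

theorem contDiff_succ_of_hasDerivAt_linear {m : ℕ} (hf : ContDiff 𝕜 m f)
    (hy : ∀ t, HasDerivAt y (a • y t + f t) t) : ContDiff 𝕜 (m + 1) y := by
  have hdiff : Differentiable 𝕜 y := fun t => (hy t).differentiableAt
  have step : ∀ {k : ℕ}, ContDiff 𝕜 k y → ContDiff 𝕜 k f → ContDiff 𝕜 (k + 1) y := by
    intro k hyk hfk
    refine contDiff_succ_iff_deriv.mpr ⟨hdiff, by simp, ?_⟩
    rw [deriv_eq_of_hasDerivAt_linear hy]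
    exact (hyk.const_smul a).add hfk
  induction m with
  | zero => exact step (contDiff_zero.mpr hdiff.continuous) hf
  | succ m ih => exact_mod_cast step (ih (hf.of_le (by norm_cast; omega))) hf

theorem iteratedDeriv_succ_eq_of_hasDerivAt_linear {m : ℕ} (hf : ContDiff 𝕜 m f)
    (hy : ∀ t, HasDerivAt y (a • y t + f t) t) (t : 𝕜) :
    iteratedDeriv (m + 1) y t =
      a ^ (m + 1) • y t + ∑ k ∈ range (m + 1), a ^ (m - k) • iteratedDeriv k f t := by
  induction m with
  | zero => simp [iteratedDeriv_one, deriv_eq_of_hasDerivAt_linear hy]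
  | succ m ih =>
    have hfm : ContDiff 𝕜 m f := hf.of_le (by norm_cast; omega)
    have hym : ContDiff 𝕜 (m + 1) y := contDiff_succ_of_hasDerivAt_linear hfm hy
    rw [iteratedDeriv_succ', deriv_eq_of_hasDerivAt_linear hy,
      iteratedDeriv_fun_add ((hym.const_smul a).contDiffAt) hf.contDiffAt,
      iteratedDeriv_fun_const_smul_field, ih hfm, sum_range_succ _ (m + 1)]
    have hpow : ∀ k ∈ range (m + 1),
        a ^ (m + 1 - k) • iteratedDeriv k f t = a • a ^ (m - k) • iteratedDeriv k f t := by
      intro k hk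
      rw [smul_smul, ← pow_succ', Nat.sub_add_comm (mem_range_succ_iff.mp hk)]
    rw [sum_congr rfl hpow, ← smul_sum, smul_add, smul_smul, ← pow_succ', Nat.sub_self, pow_zero,
      one_smul, add_assoc]

end LinearODE

theorem liqss_equilibrium_general (n : ℕ) (hn : 1 ≤ n) (a : ℝ) (ha : a ≠ 0) (u x : ℝ → ℝ)
    (hu : ContDiff ℝ (n - 1 : ℕ) u) (c : ℝ)
    (hc : c = (a ^ n * x 0 + ∑ k ∈ Finset.range n, a ^ (n - 1 - k) * iteratedDeriv k u 0) / a ^ n)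
    (hode : ∀ t : ℝ, HasDerivAt x (a * (x t - c) + u t) t) :
    ContDiffAt ℝ (n : ℕ) x 0 ∧ iteratedDeriv n x 0 = 0 := by
  obtain ⟨m, rfl⟩ : ∃ m, n = m + 1 := ⟨n - 1, by omega⟩
  rw [Nat.add_sub_cancel] at hu hc
  have hy : ∀ t, HasDerivAt (fun t => x t - c) (a • (x t - c) + u t) t :=
    fun t => (hode t).sub_const c
  have hshift : iteratedDeriv (m + 1) x = iteratedDeriv (m + 1) (fun t => x t - c) := by
    simp [iteratedDeriv_succ']
  refine ⟨?_, ?_⟩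
  · have hx : ContDiff ℝ (m + 1) x := by
      simpa using (contDiff_succ_of_hasDerivAt_linear hu hy).add (contDiff_const (c := c))
    exact_mod_cast hx.contDiffAt
  · rw [hshift, iteratedDeriv_succ_eq_of_hasDerivAt_linear hu hy]
    simp only [smul_eq_mul]
    rw [mul_sub, hc, mul_div_cancel₀ _ (pow_ne_zero _ ha)]
    ring

/-- Equilibrium case of the order-`n` LIQSS method: if `a ≠ 0`,
`c = r_n/a^n` with `r_n = a^n·x(0) + Σ_{k<n} a^(n−1−k)·u^(k)(0)`, and
`x' = a·(x − c) + u`, then `x` is `n`-times differentiable at `0` and `x^(n)(0) = 0`. -/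
theorem liqss_equilibrium (n : ℕ) (hn : 1 ≤ n) (a : ℝ) (ha : a ≠ 0) (u x : ℝ → ℝ)
    (hu : ContDiff ℝ (n - 1 : ℕ) u) (hx : Differentiable ℝ x) (c : ℝ)
    (hc : c = (a ^ n * x 0 + ∑ k ∈ Finset.range n, a ^ (n - 1 - k) * iteratedDeriv k u 0) / a ^ n)
    (hode : ∀ t : ℝ, HasDerivAt x (a * (x t - c) + u t) t) :
    ContDiffAt ℝ (n : ℕ) x 0 ∧ iteratedDeriv n x 0 = 0 :=
  liqss_equilibrium_general n hn a ha u x hu c hc hode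
end

section
/- Let a, r ∈ ℝ and ΔQ > 0 with |r| > a²·ΔQ, and let p0 ∈ {ΔQ, −ΔQ}. Consider the quadratic equation (r/p0 − a²)·t² + 2a·t − 2 = 0 in the real unknown t. Then: (i) this equation has a real solution if and only if p0 = sign(r)·ΔQ; and (ii) when p0 = sign(r)·ΔQ, it has exactly one positive solution, namely t = (√(2α − a²) − a)/(α − a²) with α := |r|/ΔQ. -/
private lemma liqss2_match (a α : ℝ) (hα : a ^ 2 < α) :
    ∀ t : ℝ, (0 < t ∧ (α - a ^ 2) * t ^ 2 + 2 * a * t - 2 = 0) ↔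
      t = (Real.sqrt (2 * α - a ^ 2) - a) / (α - a ^ 2) := by
  have hc : 0 < α - a ^ 2 := by linarith
  have hD : 0 < 2 * α - a ^ 2 := by nlinarith [sq_nonneg a]
  set s := Real.sqrt (2 * α - a ^ 2) with hsdef
  have hs2 : s ^ 2 = 2 * α - a ^ 2 := Real.sq_sqrt hD.le
  have hs0 : 0 ≤ s := Real.sqrt_nonneg _
  have hsa : |a| < s := by nlinarith [sq_abs a, abs_nonneg a]
  have ha1 : a < s := lt_of_le_of_lt (le_abs_self a) hsa
  have ha2 : -a < s := lt_of_le_of_lt (neg_le_abs a) hsa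
  have ht0pos : 0 < (s - a) / (α - a ^ 2) := div_pos (by linarith) hc
  intro t
  constructor
  · rintro ⟨htpos, heq⟩
    have key : ((α - a ^ 2) * t - (s - a)) * ((α - a ^ 2) * t + (s + a)) = 0 := by
      linear_combination (α - a ^ 2) * heq - hs2
    rcases mul_eq_zero.1 key with h | h
    · rw [eq_div_iff hc.ne']
      linarith
    · exfalso; nlinarith
  · rintro rfl
    refine ⟨ht0pos, ?_⟩
    field_simp
    nlinarith [hs2]

private lemma liqss2_mismatch (a α t : ℝ) (hα : 0 < α) :
    (-(α) - a ^ 2) * t ^ 2 + 2 * a * t - 2 ≠ 0 := by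
  nlinarith [sq_nonneg (a * t - 1), sq_nonneg t]

/-- Step-time equation of the second-order LIQSS method: for `|r| > a²·ΔQ` and `p0 = ±ΔQ`,
the quadratic `(r/p0 − a²)·t² + 2a·t − 2 = 0` has a real solution iff `p0 = sign(r)·ΔQ`,
and in that case its unique positive solution is `(√(2α − a²) − a)/(α − a²)` with
`α = |r|/ΔQ`. -/
theorem liqss2_step_time (a r ΔQ : ℝ) (hΔQ : 0 < ΔQ) (hr : |r| > a ^ 2 * ΔQ)
    (p0 : ℝ) (hp0 : p0 = ΔQ ∨ p0 = -ΔQ) :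
    ((∃ t : ℝ, (r / p0 - a ^ 2) * t ^ 2 + 2 * a * t - 2 = 0) ↔ p0 = Real.sign r * ΔQ) ∧
      (p0 = Real.sign r * ΔQ →
        ∀ t : ℝ, (0 < t ∧ (r / p0 - a ^ 2) * t ^ 2 + 2 * a * t - 2 = 0) ↔
          t = (Real.sqrt (2 * (|r| / ΔQ) - a ^ 2) - a) / (|r| / ΔQ - a ^ 2)) := by
  have hr0 : r ≠ 0 := by
    intro h
    rw [h, abs_zero] at hr
    nlinarith [sq_nonneg a]
  have hα : a ^ 2 < |r| / ΔQ := (lt_div_iff₀ hΔQ).2 (by linarith)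
  have hαpos : 0 < |r| / ΔQ := lt_of_le_of_lt (sq_nonneg a) hα
  have hkey : (r / p0 = |r| / ΔQ ∧ p0 = Real.sign r * ΔQ) ∨
      (r / p0 = -(|r| / ΔQ) ∧ p0 ≠ Real.sign r * ΔQ) := by
    rcases hr0.lt_or_gt with hneg | hpos
    · rw [Real.sign_of_neg hneg, abs_of_neg hneg]
      rcases hp0 with rfl | rfl
      · right
        constructor
        · field_simp
        · intro h; nlinarith
      · left
        constructor
        · rw [div_neg, neg_div]
        · ring
    · rw [Real.sign_of_pos hpos, abs_of_pos hpos]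
      rcases hp0 with rfl | rfl
      · left
        exact ⟨rfl, by ring⟩
      · right
        constructor
        · rw [div_neg]
        · intro h; nlinarith
  rcases hkey with ⟨hdiv, heq⟩ | ⟨hdiv, hne⟩
  · rw [hdiv]
    constructor
    · constructor
      · intro _; exact heq
      · intro _
        exact ⟨_, ((liqss2_match a (|r| / ΔQ) hα _).2 rfl).2⟩
    · intro _
      exact liqss2_match a (|r| / ΔQ) hα
  · rw [hdiv]
    constructor
    · constructor
      · rintro ⟨t, ht⟩
        exact absurd (by linarith [ht] : (-(|r| / ΔQ) - a ^ 2) * t ^ 2 + 2 * a * t - 2 = 0)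
          (liqss2_mismatch a (|r| / ΔQ) t hαpos)
      · intro h; exact absurd h hne
    · intro h; exact absurd h hne
end

section
/- Let a, r ∈ ℝ and ΔQ > 0 with |r| > a²·ΔQ, and let p0 ∈ {ΔQ, −ΔQ}. Consider the quadratic equation (r/p0 − a²)·t² + 8a·t − 16 = 0 in the real unknown t. Then: (i) its discriminant equals 64·r/p0; (ii) it has a real solution if and only if p0 = sign(r)·ΔQ; and (iii) when p0 = sign(r)·ΔQ, it has exactly one positive solution, namely t = 4/(a + √α) with α := |r|/ΔQ. -/
/-!
With `q = r / p0` the equation reads `q t² = (a t - 4)²`, so its discriminant is `64 q`. Since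
`p0 = ±ΔQ`, `q = ±|r| / ΔQ`, with the plus sign exactly when `p0 = sign(r) ΔQ`. For the minus sign
the discriminant is negative and there is no real root. For the plus sign `q = s²` with
`s = √(|r| / ΔQ) > |a|` by hypothesis, and the equation factors as `((s - a) t + 4)((s + a) t - 4) = 0`,
whose only positive root is `4 / (a + s)`.
-/

lemma Real.sign_mul_self (r : ℝ) : Real.sign r * r = |r| := by
  rcases lt_trichotomy r 0 with hr | rfl | hr
  · rw [Real.sign_of_neg hr, abs_of_neg hr, neg_one_mul]
  · simp
  · rw [Real.sign_of_pos hr, abs_of_pos hr, one_mul]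

lemma Real.div_sign_mul (r c : ℝ) : r / (Real.sign r * c) = |r| / c := by
  rw [div_mul_eq_div_div, div_eq_mul_inv r, Real.inv_sign, mul_comm, Real.sign_mul_self]

lemma Real.eq_sign_mul_or_eq_neg_sign_mul {r c p : ℝ} (hr : r ≠ 0) (hp : p = c ∨ p = -c) :
    p = Real.sign r * c ∨ p = -(Real.sign r * c) := by
  rcases Real.sign_apply_eq_of_ne_zero r hr with h | h <;> rw [h] <;> rcases hp with rfl | rfl <;>
    simp

lemma discrim_step_time_quadratic (q a : ℝ) : discrim (q - a ^ 2) (8 * a) (-16) = 64 * q := by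
  unfold discrim
  ring

lemma step_time_quadratic_ne_zero_of_neg {q : ℝ} (hq : q < 0) (a t : ℝ) :
    (q - a ^ 2) * t ^ 2 + 8 * a * t - 16 ≠ 0 := by
  have hdiscrim : ∀ s : ℝ, discrim (q - a ^ 2) (8 * a) (-16) ≠ s ^ 2 := fun s => by
    rw [discrim_step_time_quadratic]
    nlinarith [sq_nonneg s]
  simpa only [sq, ← sub_eq_add_neg] using quadratic_ne_zero_of_discrim_ne_sq hdiscrim t

lemma step_time_quadratic_pos_root_iff {a s : ℝ} (hs : |a| < s) (t : ℝ) :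
    (0 < t ∧ (s ^ 2 - a ^ 2) * t ^ 2 + 8 * a * t - 16 = 0) ↔ t = 4 / (a + s) := by
  have hsum : 0 < a + s := by linarith [neg_abs_le a]
  have hdiff : 0 < s - a := by linarith [le_abs_self a]
  constructor
  · rintro ⟨ht, heq⟩
    have hfactor : ((s - a) * t + 4) * ((s + a) * t - 4) = 0 := by linear_combination heq
    rcases mul_eq_zero.mp hfactor with h | h
    · nlinarith [mul_pos hdiff ht]
    · field_simp
      linear_combination h
  · rintro rfl
    refine ⟨by positivity, ?_⟩
    field_simp
    ring

/-- Step-time equation of the second-order Chebyshev LIQSS (CheQSS2) method: for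
`|r| > a²·ΔQ` and `p0 = ±ΔQ`, the quadratic `(r/p0 − a²)·t² + 8a·t − 16 = 0` has
discriminant `64·r/p0`, it has a real solution iff `p0 = sign(r)·ΔQ`, and in that case
its unique positive solution is `4/(a + √α)` with `α = |r|/ΔQ`. -/
theorem cheqss2_step_time (a r ΔQ : ℝ) (hΔQ : 0 < ΔQ) (hr : |r| > a ^ 2 * ΔQ)
    (p0 : ℝ) (hp0 : p0 = ΔQ ∨ p0 = -ΔQ) :
    discrim (r / p0 - a ^ 2) (8 * a) (-16) = 64 * (r / p0) ∧
    ((∃ t : ℝ, (r / p0 - a ^ 2) * t ^ 2 + 8 * a * t - 16 = 0) ↔ p0 = Real.sign r * ΔQ) ∧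
      (p0 = Real.sign r * ΔQ →
        ∀ t : ℝ, (0 < t ∧ (r / p0 - a ^ 2) * t ^ 2 + 8 * a * t - 16 = 0) ↔
          t = 4 / (a + Real.sqrt (|r| / ΔQ))) := by
  have hα : a ^ 2 < |r| / ΔQ := (lt_div_iff₀ hΔQ).2 hr
  have hαpos : 0 < |r| / ΔQ := (sq_nonneg a).trans_lt hα
  have hr0 : r ≠ 0 := abs_pos.1 ((by positivity : 0 ≤ a ^ 2 * ΔQ).trans_lt hr)
  have hs : |a| < √(|r| / ΔQ) := (Real.lt_sqrt (abs_nonneg a)).2 (by rwa [sq_abs])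
  have hgood : p0 = Real.sign r * ΔQ → r / p0 = √(|r| / ΔQ) ^ 2 := by
    rintro rfl
    rw [Real.div_sign_mul, Real.sq_sqrt hαpos.le]
  refine ⟨discrim_step_time_quadratic _ a, ⟨?_, fun h => ?_⟩, fun h t => ?_⟩
  · rintro ⟨t, ht⟩
    refine (Real.eq_sign_mul_or_eq_neg_sign_mul hr0 hp0).resolve_right fun hbad => ?_
    rw [hbad, div_neg, Real.div_sign_mul] at ht
    exact step_time_quadratic_ne_zero_of_neg (neg_neg_of_pos hαpos) a t ht
  · rw [hgood h]
    exact ⟨_, ((step_time_quadratic_pos_root_iff hs _).2 rfl).2⟩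
  · rw [hgood h]
    exact step_time_quadratic_pos_root_iff hs t
end

section
/- Let a, r ∈ ℝ and ΔQ > 0 with |r| > |a|³·ΔQ, and let p0 ∈ {ΔQ, −ΔQ}. Consider the cubic equation (r/p0 − a³)·t³ + 3a²·t² − 6a·t + 6 = 0 in the real unknown t. Then this equation has a positive real solution if and only if p0 = −sign(r)·ΔQ, and in that case the positive real solution is unique. -/
lemma no_root (c a : ℝ) (hc : 0 < c) (t : ℝ) (ht : 0 < t) :
    c * t ^ 3 + 3 * a ^ 2 * t ^ 2 - 6 * a * t + 6 ≠ 0 := by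
  have h1 : 0 < c * t ^ 3 := by positivity
  nlinarith [sq_nonneg (a * t - 1)]

lemma uniq_root (c a t1 t2 : ℝ) (ht1 : 0 < t1) (ht2 : 0 < t2)
    (h1 : c * t1 ^ 3 + 3 * a ^ 2 * t1 ^ 2 - 6 * a * t1 + 6 = 0)
    (h2 : c * t2 ^ 3 + 3 * a ^ 2 * t2 ^ 2 - 6 * a * t2 + 6 = 0) : t1 = t2 := by
  have hP : 0 < (a * t1 * t2 - (t1 + t2)) ^ 2 + t1 ^ 2 + t2 ^ 2 := by positivity
  have key : 3 * (t2 - t1) * ((a * t1 * t2 - (t1 + t2)) ^ 2 + t1 ^ 2 + t2 ^ 2) = 0 := by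
    linear_combination t2 ^ 3 * h1 - t1 ^ 3 * h2
  rcases lt_trichotomy t1 t2 with h | h | h
  · nlinarith [mul_pos (sub_pos.mpr h) hP]
  · exact h
  · nlinarith [mul_pos (sub_pos.mpr h) hP]

lemma ex_root (c a : ℝ) (hc : c < 0) :
    ∃ t : ℝ, 0 < t ∧ c * t ^ 3 + 3 * a ^ 2 * t ^ 2 - 6 * a * t + 6 = 0 := by
  set M : ℝ := 3 * a ^ 2 + 6 * |a| + 6 with hM
  set T : ℝ := max 1 (M / (-c) + 1) with hT
  have hT1 : (1 : ℝ) ≤ T := le_max_left _ _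
  have hT2 : M / (-c) + 1 ≤ T := le_max_right _ _
  have hc' : 0 < -c := by linarith
  have hMT : M < -c * T := by
    rw [mul_comm]
    exact (div_lt_iff₀ hc').mp (by linarith)
  have hT0 : 0 < T := by linarith
  have hfT : c * T ^ 3 + 3 * a ^ 2 * T ^ 2 - 6 * a * T + 6 < 0 := by
    nlinarith [mul_lt_mul_of_pos_right hMT (mul_pos hT0 hT0), le_abs_self a, neg_abs_le a,
      mul_pos hT0 hT0, sq_nonneg (T - 1), abs_nonneg a,
      mul_le_mul_of_nonneg_left (show (1:ℝ) ≤ T^2 by nlinarith) (abs_nonneg a)]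
  have hcont : ContinuousOn (fun t : ℝ => c * t ^ 3 + 3 * a ^ 2 * t ^ 2 - 6 * a * t + 6) (Set.Icc 0 T) := by
    fun_prop
  have h0 : (0:ℝ) ∈ Set.Icc (c * T ^ 3 + 3 * a ^ 2 * T ^ 2 - 6 * a * T + 6)
      (c * 0 ^ 3 + 3 * a ^ 2 * 0 ^ 2 - 6 * a * 0 + 6) := by
    constructor <;> [linarith; norm_num]
  obtain ⟨t, htmem, htval⟩ := intermediate_value_Icc' (le_of_lt hT0) hcont h0
  refine ⟨t, ?_, htval⟩
  rcases lt_or_eq_of_le htmem.1 with h | h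
  · exact h
  · exfalso; rw [← h] at htval; norm_num at htval

lemma exu_root (c a : ℝ) (hc : c < 0) :
    ∃! t : ℝ, 0 < t ∧ c * t ^ 3 + 3 * a ^ 2 * t ^ 2 - 6 * a * t + 6 = 0 := by
  obtain ⟨t, ht, htv⟩ := ex_root c a hc
  exact ⟨t, ⟨ht, htv⟩, fun s ⟨hs, hsv⟩ => uniq_root c a s t hs ht hsv htv⟩

/-- Step-time equation of the third-order LIQSS method: for `|r| > |a|³·ΔQ` and `p0 = ±ΔQ`,
the cubic `(r/p0 − a³)·t³ + 3a²·t² − 6a·t + 6 = 0` has a positive real solution iff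
`p0 = −sign(r)·ΔQ`, and in that case the positive solution is unique. -/
theorem liqss3_step_time (a r ΔQ : ℝ) (hΔQ : 0 < ΔQ) (hr : |r| > |a| ^ 3 * ΔQ)
    (p0 : ℝ) (hp0 : p0 = ΔQ ∨ p0 = -ΔQ) :
    ((∃ t : ℝ, 0 < t ∧ (r / p0 - a ^ 3) * t ^ 3 + 3 * a ^ 2 * t ^ 2 - 6 * a * t + 6 = 0) ↔
        p0 = -Real.sign r * ΔQ) ∧
      (p0 = -Real.sign r * ΔQ →
        ∃! t : ℝ, 0 < t ∧ (r / p0 - a ^ 3) * t ^ 3 + 3 * a ^ 2 * t ^ 2 - 6 * a * t + 6 = 0) := by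
  have ha3 : a ^ 3 ≤ |a| ^ 3 := by
    calc a ^ 3 ≤ |a ^ 3| := le_abs_self _
    _ = |a| ^ 3 := abs_pow a 3
  have ha3' : -(|a| ^ 3) ≤ a ^ 3 := by
    have := neg_abs_le (a ^ 3)
    rwa [abs_pow a 3] at this
  have habs0 : (0:ℝ) ≤ |a| ^ 3 * ΔQ := by positivity
  rcases lt_trichotomy r 0 with hrneg | hr0 | hrpos
  · have hsgn : Real.sign r = -1 := Real.sign_of_neg hrneg
    have habs : |r| = -r := abs_of_neg hrneg
    rcases hp0 with rfl | rfl
    · -- p0 = ΔQ, r < 0 : condition holds, c < 0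
      have hc : r / p0 - a ^ 3 < 0 := by
        have h1 : r / p0 < -(|a| ^ 3) := by
          rw [div_lt_iff₀ hΔQ]; nlinarith
        linarith
      refine ⟨⟨fun _ => by rw [hsgn]; ring, fun _ => ex_root _ a hc⟩,
        fun _ => exu_root _ a hc⟩
    · -- p0 = -ΔQ, r < 0 : condition fails, c > 0
      have hc : 0 < r / (-ΔQ) - a ^ 3 := by
        have h1 : |a| ^ 3 < r / (-ΔQ) := by
          rw [lt_div_iff_of_neg (by linarith : -ΔQ < 0)]; nlinarith
        linarith
      have hfalse : ¬ (-ΔQ = -Real.sign r * ΔQ) := by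
        rw [hsgn]; intro h; nlinarith
      exact ⟨⟨fun ⟨t, ht, htv⟩ => absurd htv (no_root _ a hc t ht),
        fun h => absurd h hfalse⟩, fun h => absurd h hfalse⟩
  · exfalso; rw [hr0, abs_zero] at hr; linarith
  · have hsgn : Real.sign r = 1 := Real.sign_of_pos hrpos
    have habs : |r| = r := abs_of_pos hrpos
    rcases hp0 with rfl | rfl
    · -- p0 = ΔQ, r > 0 : condition fails, c > 0
      have hc : 0 < r / p0 - a ^ 3 := by
        have h1 : |a| ^ 3 < r / p0 := by
          rw [lt_div_iff₀ hΔQ]; nlinarith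
        linarith
      have hfalse : ¬ (p0 = -Real.sign r * p0) := by
        rw [hsgn]; intro h; nlinarith
      exact ⟨⟨fun ⟨t, ht, htv⟩ => absurd htv (no_root _ a hc t ht),
        fun h => absurd h hfalse⟩, fun h => absurd h hfalse⟩
    · -- p0 = -ΔQ, r > 0 : condition holds, c < 0
      have hc : r / (-ΔQ) - a ^ 3 < 0 := by
        have h1 : r / (-ΔQ) < -(|a| ^ 3) := by
          rw [div_lt_iff_of_neg (by linarith : -ΔQ < 0)]; nlinarith
        linarith
      refine ⟨⟨fun _ => by rw [hsgn]; ring, fun _ => ex_root _ a hc⟩,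
        fun _ => exu_root _ a hc⟩
end

section
/- Let a, r ∈ ℝ and ΔQ > 0 with |r| > |a|³·ΔQ, and let p0 ∈ {ΔQ, −ΔQ}. Consider the cubic equation (r/p0 − a³)·t³ + 18a²·t² − 96a·t + 192 = 0 in the real unknown t. Then this equation has a positive real solution if and only if p0 = −sign(r)·ΔQ, and in that case the positive real solution is unique. -/
private lemma cheq_no_root (c a t : ℝ) (hc : 0 < c) (ht : 0 < t) :
    c * t ^ 3 + 18 * a ^ 2 * t ^ 2 - 96 * a * t + 192 ≠ 0 := by
  have h3 : 0 < t ^ 3 := pow_pos ht 3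
  nlinarith [sq_nonneg (3 * a * t - 8), mul_pos hc h3]

private lemma cheq_unique (c a : ℝ) {t1 t2 : ℝ} (h1 : 0 < t1) (h2 : 0 < t2)
    (e1 : c * t1 ^ 3 + 18 * a ^ 2 * t1 ^ 2 - 96 * a * t1 + 192 = 0)
    (e2 : c * t2 ^ 3 + 18 * a ^ 2 * t2 ^ 2 - 96 * a * t2 + 192 = 0) :
    t1 = t2 := by
  have key : (t2 - t1) * (18 * a ^ 2 * t1 ^ 2 * t2 ^ 2
      - 96 * a * (t1 * t2) * (t1 + t2) + 192 * (t1 ^ 2 + t1 * t2 + t2 ^ 2)) = 0 := by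
    linear_combination t2 ^ 3 * e1 - t1 ^ 3 * e2
  have hB : 0 < 18 * a ^ 2 * t1 ^ 2 * t2 ^ 2
      - 96 * a * (t1 * t2) * (t1 + t2) + 192 * (t1 ^ 2 + t1 * t2 + t2 ^ 2) := by
    nlinarith [sq_nonneg (3 * a * (t1 * t2) - 8 * (t1 + t2)), sq_nonneg (t1 - t2),
      mul_pos h1 h2]
  rcases mul_eq_zero.mp key with h | h
  · linarith
  · exact absurd h (ne_of_gt hB)

private lemma cheq_exists (c a : ℝ) (hc : c < 0) :
    ∃ t : ℝ, 0 < t ∧ c * t ^ 3 + 18 * a ^ 2 * t ^ 2 - 96 * a * t + 192 = 0 := by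
  set f : ℝ → ℝ := fun t => c * t ^ 3 + 18 * a ^ 2 * t ^ 2 - 96 * a * t + 192 with hf
  have hcont : Continuous f := by fun_prop
  set T : ℝ := max 1 ((18 * a ^ 2 + 96 * |a| + 193) / (-c)) with hT
  have hT1 : 1 ≤ T := le_max_left _ _
  have hT0 : 0 < T := lt_of_lt_of_le one_pos hT1
  have hnc : 0 < -c := neg_pos.mpr hc
  have hTc : c * T ≤ -(18 * a ^ 2 + 96 * |a| + 193) := by
    have h2 : (18 * a ^ 2 + 96 * |a| + 193) / (-c) ≤ T := le_max_right _ _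
    rw [div_le_iff₀ hnc] at h2
    nlinarith
  have hfT : f T < 0 := by
    have habs : -a ≤ |a| := neg_le_abs a
    have habs2 : a ≤ |a| := le_abs_self a
    have h1 : T ≤ T ^ 2 := by nlinarith
    have hfTle : f T ≤ T ^ 2 * (c * T + 18 * a ^ 2 + 96 * |a| + 192) := by
      simp only [hf]
      nlinarith [abs_nonneg a, sq_nonneg a]
    nlinarith [sq_nonneg T]
  have h0 : f 0 = 192 := by simp [hf]
  have hmem : (0 : ℝ) ∈ Set.Icc (f T) (f 0) := ⟨hfT.le, by rw [h0]; norm_num⟩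
  obtain ⟨t, ht, hft⟩ := intermediate_value_Icc' hT0.le hcont.continuousOn hmem
  refine ⟨t, ?_, hft⟩
  rcases eq_or_lt_of_le ht.1 with h | h
  · exfalso
    rw [← h] at hft
    rw [h0] at hft
    norm_num at hft
  · exact h

/-- Step-time equation of the third-order Chebyshev LIQSS (CheQSS3) method: for
`|r| > |a|³·ΔQ` and `p0 = ±ΔQ`, the cubic `(r/p0 − a³)·t³ + 18a²·t² − 96a·t + 192 = 0`
has a positive real solution iff `p0 = −sign(r)·ΔQ`, and in that case the positive
solution is unique. -/
theorem cheqss3_step_time (a r ΔQ : ℝ) (hΔQ : 0 < ΔQ) (hr : |r| > |a| ^ 3 * ΔQ)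
    (p0 : ℝ) (hp0 : p0 = ΔQ ∨ p0 = -ΔQ) :
    ((∃ t : ℝ, 0 < t ∧
          (r / p0 - a ^ 3) * t ^ 3 + 18 * a ^ 2 * t ^ 2 - 96 * a * t + 192 = 0) ↔
        p0 = -Real.sign r * ΔQ) ∧
      (p0 = -Real.sign r * ΔQ →
        ∃! t : ℝ, 0 < t ∧
          (r / p0 - a ^ 3) * t ^ 3 + 18 * a ^ 2 * t ^ 2 - 96 * a * t + 192 = 0) := by
  have habs3 : a ^ 3 ≤ |a| ^ 3 := by
    calc a ^ 3 ≤ |a ^ 3| := le_abs_self _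
    _ = |a| ^ 3 := abs_pow a 3
  have habs3' : -(|a| ^ 3) ≤ a ^ 3 := by
    calc -(|a| ^ 3) = -|a ^ 3| := by rw [abs_pow]
    _ ≤ a ^ 3 := neg_abs_le _
  have hr0 : r ≠ 0 := by
    intro h
    rw [h, abs_zero] at hr
    have : (0 : ℝ) ≤ |a| ^ 3 * ΔQ := by positivity
    linarith
  -- key dichotomy on the leading coefficient
  have hcneg : p0 = -Real.sign r * ΔQ → r / p0 - a ^ 3 < 0 := by
    intro hp
    rcases lt_or_gt_of_ne hr0 with hrneg | hrpos
    · rw [Real.sign_of_neg hrneg] at hp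
      have hp' : p0 = ΔQ := by rw [hp]; ring
      rw [hp']
      have habs : |r| = -r := abs_of_neg hrneg
      rw [habs] at hr
      have : r / ΔQ < -(|a| ^ 3) := by
        rw [div_lt_iff₀ hΔQ]
        nlinarith
      linarith
    · rw [Real.sign_of_pos hrpos] at hp
      have hp' : p0 = -ΔQ := by rw [hp]; ring
      rw [hp']
      have habs : |r| = r := abs_of_pos hrpos
      rw [habs] at hr
      have : r / (-ΔQ) < -(|a| ^ 3) := by
        rw [div_lt_iff_of_neg (by linarith : -ΔQ < 0)]
        nlinarith
      linarith
  have hcpos : p0 ≠ -Real.sign r * ΔQ → 0 < r / p0 - a ^ 3 := by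
    intro hp
    rcases lt_or_gt_of_ne hr0 with hrneg | hrpos
    · rw [Real.sign_of_neg hrneg] at hp
      have hp' : p0 = -ΔQ := by
        rcases hp0 with h | h
        · exfalso; apply hp; rw [h]; ring
        · exact h
      rw [hp']
      have habs : |r| = -r := abs_of_neg hrneg
      rw [habs] at hr
      have : |a| ^ 3 < r / (-ΔQ) := by
        rw [lt_div_iff_of_neg (by linarith : -ΔQ < 0)]
        nlinarith
      linarith
    · rw [Real.sign_of_pos hrpos] at hp
      have hp' : p0 = ΔQ := by
        rcases hp0 with h | h
        · exact h
        · exfalso; apply hp; rw [h]; ring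
      rw [hp']
      have habs : |r| = r := abs_of_pos hrpos
      rw [habs] at hr
      have : |a| ^ 3 < r / ΔQ := by
        rw [lt_div_iff₀ hΔQ]
        nlinarith
      linarith
  constructor
  · constructor
    · rintro ⟨t, ht, hroot⟩
      by_contra hp
      exact cheq_no_root _ a t (hcpos hp) ht hroot
    · intro hp
      exact cheq_exists _ a (hcneg hp)
  · intro hp
    obtain ⟨t, ht, hroot⟩ := cheq_exists _ a (hcneg hp)
    exact ⟨t, ⟨ht, hroot⟩, fun t' ⟨ht', hroot'⟩ => cheq_unique _ a ht' ht hroot' hroot⟩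
end
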